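/- For α > -1, the function g(σ) = ∫₀^π e^{-σ(1 - cos θ)} (sin θ)^α dθ satisfies g(σ) = 2^{(α-1)/2} Γ((α+1)/2) σ^{-(α+1)/2} (1 + O(1/σ)) as σ → ∞. -/

import Mathlib

open Real MeasureTheory Set Filter Asymptotics Topology

/-!
The substitution `t = 1 - cos θ` turns `g σ` into the Laplace transform
`∫₀² e^{-σt} (t(2-t))^b dt` with `b = (α-1)/2`. Near `t = 0` the kernel is
`2^b t^b (1 + O(t))`, and `2^b t^b` alone has Laplace transform `2^b Γ(b+1) σ^{-(b+1)}`.
The remainder is `O(t^{b+1})` near `0` and integrable against `e^{-t}`, so by Watson's lemma it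
contributes `O(σ^{-(b+2)})`: on `(0, δ)` it is bounded by a Gamma integral, and beyond `δ` it is
exponentially small in `σ`.
-/

lemma image_one_sub_cos_Ioo : (fun θ => 1 - cos θ) '' Ioo 0 π = Ioo 0 2 := by
  have hcos : cos '' Ioo 0 π = Ioo (-1) 1 := by
    simpa using cosPartialHomeomorph.image_source_eq_target
  rw [← image_image (fun u => 1 - u), hcos, image_const_sub_Ioo]
  norm_num

lemma integral_comp_one_sub_cos_mul_sin_rpow (f : ℝ → ℝ) (α : ℝ) :
    ∫ θ in (0:ℝ)..π, f (1 - cos θ) * sin θ ^ α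
      = ∫ t in Ioo (0:ℝ) 2, f t * (t * (2 - t)) ^ ((α - 1) / 2) := by
  have hinj : InjOn (fun θ => 1 - cos θ) (Ioo 0 π) := fun x hx y hy hxy =>
    cosPartialHomeomorph.injOn hx hy (sub_right_injective hxy)
  rw [intervalIntegral.integral_of_le pi_pos.le, integral_Ioc_eq_integral_Ioo,
    ← image_one_sub_cos_Ioo, integral_image_eq_integral_abs_deriv_smul measurableSet_Ioo
      (fun θ _ => ((hasDerivAt_cos θ).const_sub 1).hasDerivWithinAt) hinj]
  refine setIntegral_congr_fun measurableSet_Ioo fun θ hθ => ?_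
  have hsin : 0 < sin θ := sin_pos_of_pos_of_lt_pi hθ.1 hθ.2
  have hsq : (1 - cos θ) * (2 - (1 - cos θ)) = sin θ ^ (2:ℝ) := by
    rw [rpow_two, sin_sq]; ring
  have hpow : sin θ ^ α = sin θ ^ (2 * ((α - 1) / 2)) * sin θ := by
    rw [← rpow_add_one hsin.ne']; ring_nf
  rw [smul_eq_mul, neg_neg, abs_of_pos hsin, hsq, ← rpow_mul hsin.le, hpow]
  ring

lemma integrableOn_exp_neg_mul_mul_rpow {s σ : ℝ} (hs : -1 < s) (hσ : 0 < σ) :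
    IntegrableOn (fun t : ℝ => exp (-(σ * t)) * t ^ s) (Ioi 0) :=
  (integrableOn_rpow_mul_exp_neg_mul_rpow hs one_pos hσ).congr_fun
    (fun t _ => by simp only [rpow_one, neg_mul]; ring) measurableSet_Ioi

lemma integral_exp_neg_mul_mul_rpow {s σ : ℝ} (hs : -1 < s) (hσ : 0 < σ) :
    ∫ t in Ioi (0:ℝ), exp (-(σ * t)) * t ^ s = Gamma (s + 1) * σ ^ (-(s + 1)) := by
  have h := integral_rpow_mul_exp_neg_mul_Ioi (a := s + 1) (by linarith) hσ
  simp only [add_sub_cancel_right] at h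
  simp_rw [mul_comm (exp _)]
  rw [h, one_div, inv_rpow hσ.le, rpow_neg hσ.le, mul_comm]

lemma norm_exp_neg_mul_mul_le {h : ℝ → ℝ} {M s a δ σ t : ℝ}
    (hM : ∀ t ∈ Ioo 0 δ, ‖h t‖ ≤ M * ‖t ^ s‖) (hM0 : 0 ≤ M) (haσ : a ≤ σ) (ht : 0 < t) :
    ‖exp (-(σ * t)) * h t‖
      ≤ M * (exp (-(σ * t)) * t ^ s) + exp (a * δ) * exp (-δ * σ) * ‖exp (-(a * t)) * h t‖ := by
  have hts : 0 ≤ t ^ s := rpow_nonneg ht.le s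
  rw [norm_mul, norm_of_nonneg (exp_pos _).le]
  rcases lt_or_ge t δ with htδ | hδt
  · have hnear := hM t ⟨ht, htδ⟩
    rw [norm_of_nonneg hts] at hnear
    calc exp (-(σ * t)) * ‖h t‖ ≤ M * (exp (-(σ * t)) * t ^ s) := by
          rw [mul_left_comm]; gcongr
      _ ≤ _ := le_add_of_nonneg_right (by positivity)
  · have hfar : exp (-(σ * t)) ≤ exp (a * δ) * exp (-δ * σ) * exp (-(a * t)) := by
      rw [← exp_add, ← exp_add, exp_le_exp]
      nlinarith
    calc exp (-(σ * t)) * ‖h t‖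
        ≤ exp (a * δ) * exp (-δ * σ) * ‖exp (-(a * t)) * h t‖ := by
          rw [norm_mul, norm_of_nonneg (exp_pos _).le, ← mul_assoc]; gcongr
      _ ≤ _ := le_add_of_nonneg_left (by positivity)

theorem isBigO_integral_exp_neg_mul_mul {h : ℝ → ℝ} {s a : ℝ} (hs : -1 < s)
    (hh : h =O[𝓝[>] 0] (fun t => t ^ s))
    (hint : IntegrableOn (fun t => exp (-(a * t)) * h t) (Ioi 0)) :
    (fun σ => ∫ t in Ioi (0:ℝ), exp (-(σ * t)) * h t) =O[atTop] (fun σ => σ ^ (-(s + 1))) := by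
  obtain ⟨M, hM, hMh⟩ := hh.exists_pos
  obtain ⟨δ, hδ, hMδ⟩ := mem_nhdsGT_iff_exists_Ioo_subset.mp hMh.bound
  set L := ∫ t in Ioi (0:ℝ), ‖exp (-(a * t)) * h t‖
  have hbound : ∀ σ, max a 0 < σ → ‖∫ t in Ioi (0:ℝ), exp (-(σ * t)) * h t‖
      ≤ M * Gamma (s + 1) * σ ^ (-(s + 1)) + exp (a * δ) * L * exp (-δ * σ) := by
    intro σ hσ
    have hσ0 : 0 < σ := (le_max_right a 0).trans_lt hσ
    have hmain := (integrableOn_exp_neg_mul_mul_rpow hs hσ0).const_mul M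
    have htail := hint.norm.const_mul (exp (a * δ) * exp (-δ * σ))
    calc _ ≤ ∫ t in Ioi (0:ℝ), (M * (exp (-(σ * t)) * t ^ s)
          + exp (a * δ) * exp (-δ * σ) * ‖exp (-(a * t)) * h t‖) :=
          norm_integral_le_of_norm_le (hmain.add htail) <|
            (ae_restrict_iff' measurableSet_Ioi).mpr <| Eventually.of_forall fun t ht =>
              norm_exp_neg_mul_mul_le hMδ hM.le ((le_max_left a 0).trans hσ.le) ht
      _ = _ := by
          rw [integral_add hmain htail, integral_const_mul, integral_const_mul,
            integral_exp_neg_mul_mul_rpow hs hσ0]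
          ring
  have hB : (fun σ => M * Gamma (s + 1) * σ ^ (-(s + 1)) + exp (a * δ) * L * exp (-δ * σ))
      =O[atTop] (fun σ => σ ^ (-(s + 1))) :=
    (isBigO_const_mul_self _ _ _).add
      ((isLittleO_exp_neg_mul_rpow_atTop hδ _).isBigO.const_mul_left _)
  refine (IsBigO.of_norm_eventuallyLE ?_).trans hB
  filter_upwards [eventually_gt_atTop (max a 0)] with σ hσ using hbound σ hσ

lemma intervalIntegrable_mul_two_sub_rpow {b : ℝ} (hb : -1 < b) :
    IntervalIntegrable (fun t : ℝ => (t * (2 - t)) ^ b) volume 0 2 := by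
  have hleft : IntervalIntegrable (fun t : ℝ => t ^ b * (2 - t) ^ b) volume 0 1 :=
    (intervalIntegral.intervalIntegrable_rpow' hb).mul_continuousOn <|
      ContinuousOn.rpow_const (by fun_prop) fun t ht => by
        left; simp only [zero_le_one, uIcc_of_le, mem_Icc] at ht; linarith
  have hright : IntervalIntegrable (fun t : ℝ => t ^ b * (2 - t) ^ b) volume 1 2 := by
    have h :=
      ((intervalIntegral.intervalIntegrable_rpow' hb (a := 0) (b := 1)).comp_sub_left 2).symm
    rw [sub_zero, show (2:ℝ) - 1 = 1 by norm_num] at h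
    refine h.continuousOn_mul (ContinuousOn.rpow_const (by fun_prop) fun t ht => ?_)
    left; simp only [one_le_two, uIcc_of_le, mem_Icc] at ht; linarith
  refine (hleft.trans hright).congr ?_
  rw [uIoc_of_le (zero_le_two : (0:ℝ) ≤ 2)]
  exact fun t ht => (mul_rpow ht.1.le (by linarith [ht.2])).symm

lemma integrable_exp_neg_mul_mul_indicator_mul_two_sub_rpow {b : ℝ} (hb : -1 < b) (σ : ℝ) :
    Integrable (fun t => exp (-(σ * t)) * (Ioo 0 2).indicator (fun t => (t * (2 - t)) ^ b) t) := by
  have h := ((intervalIntegrable_mul_two_sub_rpow hb).continuousOn_mul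
    (g := fun t => exp (-(σ * t))) (by fun_prop))
  rw [intervalIntegrable_iff_integrableOn_Ioo_of_le zero_le_two] at h
  rw [show (fun t => exp (-(σ * t)) * (Ioo 0 2).indicator (fun t => (t * (2 - t)) ^ b) t)
      = (Ioo 0 2).indicator (fun t => exp (-(σ * t)) * (t * (2 - t)) ^ b) from
    funext fun t => (indicator_mul_right _ (fun t => exp (-(σ * t))) _).symm]
  exact (integrable_indicator_iff measurableSet_Ioo).mpr h

lemma isBigO_indicator_mul_two_sub_rpow_sub (b : ℝ) :
    (fun t : ℝ => (Ioo 0 2).indicator (fun t => (t * (2 - t)) ^ b) t - 2 ^ b * t ^ b)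
      =O[𝓝[>] 0] (fun t => t ^ (b + 1)) := by
  have hderiv := (((hasDerivAt_id' (0:ℝ)).div_const 2).const_sub 1).rpow_const (p := b)
    (by norm_num)
  have hlin : (fun u : ℝ => (1 - u / 2) ^ b - 1) =O[𝓝[>] 0] (fun u => u) := by
    simpa using hderiv.isBigO_sub.mono nhdsWithin_le_nhds
  have hprod := (isBigO_const_mul_self (2 ^ b) (fun t : ℝ => t ^ b) (𝓝[>] 0)).mul hlin
  refine hprod.congr' ?_ ?_
  · filter_upwards [Ioo_mem_nhdsGT (show (0:ℝ) < 2 by norm_num)] with t ht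
    rw [indicator_of_mem ht, show t * (2 - t) = 2 * t * (1 - t / 2) by ring,
      mul_rpow (by linarith [ht.1]) (by linarith [ht.2]), mul_rpow zero_le_two ht.1.le]
    ring
  · filter_upwards [self_mem_nhdsWithin] with t (ht : 0 < t)
    rw [rpow_add_one ht.ne']

lemma integral_exp_neg_mul_mul_two_sub_rpow_sub_eq {b σ : ℝ} (hb : -1 < b) (hσ : 0 < σ) :
    (∫ t in Ioo (0:ℝ) 2, exp (-(σ * t)) * (t * (2 - t)) ^ b)
        - 2 ^ b * Gamma (b + 1) * σ ^ (-(b + 1))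
      = ∫ t in Ioi (0:ℝ), exp (-(σ * t))
          * ((Ioo 0 2).indicator (fun t => (t * (2 - t)) ^ b) t - 2 ^ b * t ^ b) := by
  have hkernel := (integrable_exp_neg_mul_mul_indicator_mul_two_sub_rpow hb σ).integrableOn
    (s := Ioi 0)
  have hmain := (integrableOn_exp_neg_mul_mul_rpow hb hσ).const_mul (2 ^ b)
  simp_rw [mul_sub (exp _), mul_left_comm (exp _) (2 ^ b)]
  rw [integral_sub hkernel hmain, integral_const_mul, integral_exp_neg_mul_mul_rpow hb hσ,
    ← mul_assoc]
  congr 1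
  simp_rw [← indicator_mul_right _ (fun t => exp (-(σ * t)))]
  rw [setIntegral_indicator measurableSet_Ioo, inter_eq_right.mpr Ioo_subset_Ioi_self]

theorem isBigO_integral_exp_neg_mul_mul_two_sub_rpow_sub {b : ℝ} (hb : -1 < b) :
    (fun σ => (∫ t in Ioo (0:ℝ) 2, exp (-(σ * t)) * (t * (2 - t)) ^ b)
        - 2 ^ b * Gamma (b + 1) * σ ^ (-(b + 1)))
      =O[atTop] (fun σ => σ ^ (-(b + 2))) := by
  have hint : IntegrableOn (fun t => exp (-(1 * t))
      * ((Ioo 0 2).indicator (fun t => (t * (2 - t)) ^ b) t - 2 ^ b * t ^ b)) (Ioi 0) := by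
    simp_rw [mul_sub (exp _), mul_left_comm (exp _) (2 ^ b)]
    exact (integrable_exp_neg_mul_mul_indicator_mul_two_sub_rpow hb 1).integrableOn.sub
      ((integrableOn_exp_neg_mul_mul_rpow hb one_pos).const_mul _)
  refine (isBigO_integral_exp_neg_mul_mul (by linarith)
    (isBigO_indicator_mul_two_sub_rpow_sub b) hint).congr' ?_ ?_
  · filter_upwards [eventually_gt_atTop 0] with σ hσ
    exact (integral_exp_neg_mul_mul_two_sub_rpow_sub_eq hb hσ).symm
  · exact Eventually.of_forall fun σ => by ring_nf

lemma isBigO_mul_rpow_div_sub_one {f : ℝ → ℝ} {D s : ℝ} (hD : D ≠ 0)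
    (hf : (fun σ => f σ - D * σ ^ (-s)) =O[atTop] (fun σ => σ ^ (-(s + 1)))) :
    (fun σ => f σ * σ ^ s / D - 1) =O[atTop] (fun σ => σ⁻¹) := by
  refine (hf.mul (isBigO_const_mul_self D⁻¹ (fun σ => σ ^ s) atTop)).congr' ?_ ?_
  all_goals filter_upwards [eventually_gt_atTop 0] with σ hσ
  · have hpow : σ ^ (-s) * σ ^ s = 1 := by rw [← rpow_add hσ, neg_add_cancel, rpow_zero]
    linear_combination (-(D * D⁻¹)) * hpow - mul_inv_cancel₀ hD
  · rw [← rpow_add hσ, show -(s + 1) + s = -1 by ring, rpow_neg_one]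

lemma exists_bound_div_of_isBigO_inv {f : ℝ → ℝ} (hf : f =O[atTop] (fun σ => σ⁻¹)) :
    ∃ C σ₀ : ℝ, 0 < C ∧ 0 < σ₀ ∧ ∀ σ, σ₀ ≤ σ → |f σ| ≤ C / σ := by
  obtain ⟨C, hC, hCf⟩ := hf.exists_pos
  obtain ⟨σ₁, hσ₁⟩ := eventually_atTop.mp hCf.bound
  refine ⟨C, max σ₁ 1, hC, by positivity, fun σ hσ => ?_⟩
  have hσ0 : 0 < σ := by linarith [le_max_right σ₁ 1]
  simpa [abs_of_pos hσ0, div_eq_mul_inv] using hσ₁ σ (le_of_max_le_left hσ)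

theorem stmt1 (α : ℝ) (hα : -1 < α) (g : ℝ → ℝ)
    (hg : ∀ σ : ℝ, g σ =
      ∫ θ in (0:ℝ)..Real.pi, Real.exp (-σ * (1 - Real.cos θ)) * Real.sin θ ^ α) :
    ∃ C σ₀ : ℝ, 0 < C ∧ 0 < σ₀ ∧ ∀ σ : ℝ, σ₀ ≤ σ →
      |g σ * σ ^ ((α + 1) / 2) / ((2:ℝ) ^ ((α - 1) / 2) * Real.Gamma ((α + 1) / 2)) - 1|
        ≤ C / σ := by
  have hb : -1 < (α - 1) / 2 := by linarith
  set b := (α - 1) / 2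
  have hab : (α + 1) / 2 = b + 1 := by ring
  have hg' : ∀ σ, g σ = ∫ t in Ioo (0:ℝ) 2, exp (-(σ * t)) * (t * (2 - t)) ^ b := fun σ => by
    simpa only [neg_mul] using (hg σ).trans
      (integral_comp_one_sub_cos_mul_sin_rpow (fun t => exp (-σ * t)) α)
  have hD : 2 ^ b * Gamma (b + 1) ≠ 0 :=
    (mul_pos (rpow_pos_of_pos two_pos b) (Gamma_pos_of_pos (by linarith))).ne'
  rw [hab]
  refine exists_bound_div_of_isBigO_inv (isBigO_mul_rpow_div_sub_one hD ?_)
  simpa only [hg', mul_assoc, show -(b + 1 + 1) = -(b + 2) by ring]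
    using isBigO_integral_exp_neg_mul_mul_two_sub_rpow_sub hb
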